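/- arXiv:1801.01722 — 4 statements merged into one kernel-verified Lean document; each statement's English description precedes it below -/
import Mathlib

section
/- Suppose g : ℝ → ℝ is C¹ with g(0)=0 and satisfies the dissipativity condition liminf_{|r|→∞} (g(r)r + (λ₁ − κ)r²) > 0 for some κ > 0, where λ₁ = inf_{v≠0} ‖v‖²_{X_{σ0}}/‖v‖²_{L²(Ω)} > 0. Then its primitive ĝ satisfies ∫_Ω ĝ(u) dx ≥ −((λ₁−κ)/2)‖u‖²_{L²(Ω)} − C for some constant C ≥ 0 and all admissible u, and hence the energy E_σ(v) = (1/2)‖v‖²_{X_{σ0}} + ∫_Ω ĝ(v) dx satisfies the coercivity bound E_σ(v) ≥ κ₀ ‖v‖²_{X_{σ0}} − C with κ₀ = κ/(2λ₁), for all v ∈ X_{σ0}. -/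
/-!
Set `H r = G r + ((lam1 - κ)/2) r²`. Dissipativity says `H'(r) r = g r r + (lam1 - κ) r² > 0` for
large `|r|`, so `H` decreases far to the left and increases far to the right; hence it attains a
global minimum `c`, and integrating `H ∘ u ≥ c` over the finite measure space gives the first bound.
The energy bound follows by splitting `(1/2) Q u = κ/(2 lam1) Q u + (lam1 - κ)/(2 lam1) Q u` and
applying `lam1 ∫ u² ≤ Q u` to the second part.
-/

open MeasureTheory Filter

open Set in
theorem exists_forall_le_of_deriv_nonpos_atBot_nonneg_atTop {f f' : ℝ → ℝ}
    (hf : ∀ x, HasDerivAt f (f' x) x) (hbot : ∀ᶠ x in atBot, f' x ≤ 0) (htop : ∀ᶠ x in atTop, 0 ≤ f' x) :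
    ∃ x₀, ∀ x, f x₀ ≤ f x := by
  obtain ⟨b, hb⟩ := eventually_atTop.1 htop
  obtain ⟨a, ha⟩ := eventually_atBot.1 (hbot.and (eventually_le_atBot b))
  have hab : a ≤ b := (ha a le_rfl).2
  have hcont : Continuous f := continuous_iff_continuousAt.2 fun x => (hf x).continuousAt
  have hanti : AntitoneOn f (Iic a) :=
    antitoneOn_of_hasDerivWithinAt_nonpos (convex_Iic a) hcont.continuousOn
      (fun x _ => (hf x).hasDerivWithinAt) fun x hx => (ha x (interior_subset (s := Iic a) hx)).1
  have hmono : MonotoneOn f (Ici b) :=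
    monotoneOn_of_hasDerivWithinAt_nonneg (convex_Ici b) hcont.continuousOn
      (fun x _ => (hf x).hasDerivWithinAt) fun x hx => hb x (interior_subset (s := Ici b) hx)
  obtain ⟨x₀, -, hmin⟩ := isCompact_Icc.exists_isMinOn (nonempty_Icc.2 hab) hcont.continuousOn
  refine ⟨x₀, fun x => ?_⟩
  rcases le_or_gt x a with hxa | hax
  · exact (hmin ⟨le_rfl, hab⟩).trans (hanti hxa (le_refl a) hxa)
  rcases le_or_gt b x with hbx | hxb
  · exact (hmin ⟨hab, le_rfl⟩).trans (hmono (le_refl b) hbx hbx)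
  · exact hmin ⟨hax.le, hxb.le⟩

theorem exists_le_add_sq_of_dissipative {g G : ℝ → ℝ} {b : ℝ} (hG : ∀ r, HasDerivAt G (g r) r)
    (hdiss : ∀ᶠ r in cocompact ℝ, 0 ≤ g r * r + b * r ^ 2) :
    ∃ c, ∀ r, c ≤ G r + b / 2 * r ^ 2 := by
  have hH : ∀ r, HasDerivAt (fun r => G r + b / 2 * r ^ 2) (g r + b * r) r := fun r =>
    ((hG r).add ((hasDerivAt_pow 2 r).const_mul (b / 2))).congr_deriv (by push_cast; ring)
  have hdiss' : ∀ᶠ r in cocompact ℝ, 0 ≤ (g r + b * r) * r := hdiss.mono fun r h => by linarith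
  obtain ⟨r₀, hr₀⟩ := exists_forall_le_of_deriv_nonpos_atBot_nonneg_atTop hH
    ((hdiss'.filter_mono atBot_le_cocompact).and (eventually_lt_atBot 0) |>.mono
      fun r ⟨h, hr⟩ => nonpos_of_mul_nonneg_left h hr)
    ((hdiss'.filter_mono atTop_le_cocompact).and (eventually_gt_atTop 0) |>.mono
      fun r ⟨h, hr⟩ => nonneg_of_mul_nonneg_left h hr)
  exact ⟨_, hr₀⟩

theorem div_mul_le_half_mul_sub_of_mul_le {lam κ s q : ℝ} (hlam : 0 < lam) (hκ : κ ≤ lam)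
    (hpoin : lam * s ≤ q) : κ / (2 * lam) * q ≤ 1 / 2 * q - (lam - κ) / 2 * s := by
  rw [div_mul_eq_mul_div, div_le_iff₀ (by positivity)]
  nlinarith [mul_le_mul_of_nonneg_left hpoin (sub_nonneg.2 hκ)]

theorem energy_coercivity_general {α : Type*} [MeasurableSpace α] (μ : Measure α)
    [IsFiniteMeasure μ]
    (g G : ℝ → ℝ)
    (hprim : ∀ r : ℝ, HasDerivAt G (g r) r)
    (A : (α → ℝ) → Prop)            -- admissible class (v ∈ X_{σ0})
    (Q : (α → ℝ) → ℝ)               -- squared X_{σ0}-norm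
    (lam1 κ : ℝ) (hlam1 : 0 < lam1) (hkl : κ ≤ lam1)
    (hpoin : ∀ v, A v → lam1 * ∫ x, (v x) ^ 2 ∂μ ≤ Q v)
    -- dissipativity: liminf_{|r|→∞} (g(r) r + (lam1 - κ) r²) > 0
    (hdiss : ∃ ε : ℝ, 0 < ε ∧ ∀ᶠ r in cocompact ℝ, ε ≤ g r * r + (lam1 - κ) * r ^ 2) :
    ∃ C : ℝ, 0 ≤ C ∧ ∀ u : α → ℝ, A u →
      Integrable (fun x => G (u x)) μ → Integrable (fun x => (u x) ^ 2) μ →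
      (-((lam1 - κ) / 2) * ∫ x, (u x) ^ 2 ∂μ - C ≤ ∫ x, G (u x) ∂μ) ∧
      ((κ / (2 * lam1)) * Q u - C ≤ (1 / 2) * Q u + ∫ x, G (u x) ∂μ) := by
  obtain ⟨ε, hε, hev⟩ := hdiss
  obtain ⟨c, hc⟩ := exists_le_add_sq_of_dissipative hprim (hev.mono fun r h => hε.le.trans h)
  refine ⟨max 0 (-c) * μ.real Set.univ, by positivity, fun u hAu hGint hsqint => ?_⟩
  have hsqint' := hsqint.const_mul ((lam1 - κ) / 2)
  have hlow : c * μ.real Set.univ ≤ ∫ x, G (u x) ∂μ + (lam1 - κ) / 2 * ∫ x, (u x) ^ 2 ∂μ := by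
    rw [← integral_const_mul, ← integral_add hGint hsqint']
    simpa [mul_comm] using integral_mono (integrable_const c) (hGint.add hsqint') fun x => hc (u x)
  have hC : -(max 0 (-c) * μ.real Set.univ) ≤ c * μ.real Set.univ := by
    rw [← neg_mul]
    exact mul_le_mul_of_nonneg_right (neg_le.2 (le_max_right 0 (-c))) measureReal_nonneg
  exact ⟨by linarith, by linarith [div_mul_le_half_mul_sub_of_mul_le hlam1 hkl (hpoin u hAu)]⟩

/-- Dissipativity implies the lower bound `∫ G(u) ≥ -((lam1-κ)/2)‖u‖²_{L²} - C` and the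
coercivity `E_σ(v) ≥ κ₀ ‖v‖²_{X_{σ0}} - C`, `κ₀ = κ/(2lam1)`.  Here `Ω` is modelled by a
finite measure space, `A` is the class of admissible functions (membership in `X_{σ0}`),
`Q v = ‖v‖²_{X_{σ0}}` is the squared Gagliardo norm, and `lam1 > 0` is the first
eigenvalue, i.e. `lam1 ∫ v² ≤ Q v` for admissible `v`. -/
theorem energy_coercivity {α : Type*} [MeasurableSpace α] (μ : Measure α)
    [IsFiniteMeasure μ]
    (g G : ℝ → ℝ) (hgcont : Continuous g) (hg0 : g 0 = 0)
    (hprim : ∀ r : ℝ, HasDerivAt G (g r) r)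
    (A : (α → ℝ) → Prop)            -- admissible class (v ∈ X_{σ0})
    (Q : (α → ℝ) → ℝ)               -- squared X_{σ0}-norm
    (hQ : ∀ v, A v → 0 ≤ Q v)
    (lam1 κ : ℝ) (hlam1 : 0 < lam1) (hκ : 0 < κ) (hkl : κ ≤ lam1)
    (hpoin : ∀ v, A v → lam1 * ∫ x, (v x) ^ 2 ∂μ ≤ Q v)
    -- dissipativity: liminf_{|r|→∞} (g(r) r + (lam1 - κ) r²) > 0
    (hdiss : ∃ ε : ℝ, 0 < ε ∧ ∀ᶠ r in cocompact ℝ, ε ≤ g r * r + (lam1 - κ) * r ^ 2) :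
    ∃ C : ℝ, 0 ≤ C ∧ ∀ u : α → ℝ, A u →
      Integrable (fun x => G (u x)) μ → Integrable (fun x => (u x) ^ 2) μ →
      (-((lam1 - κ) / 2) * ∫ x, (u x) ^ 2 ∂μ - C ≤ ∫ x, G (u x) ∂μ) ∧
      ((κ / (2 * lam1)) * Q u - C ≤ (1 / 2) * Q u + ∫ x, G (u x) ∂μ) :=
  energy_coercivity_general μ g G hprim A Q lam1 κ hlam1 hkl hpoin hdiss
end

section
/- Let g : ℝ → ℝ be continuous with g(r)·sign(r) > 0 for all |r| > γ (for some γ > 0), and let φ ∈ X_{σ0} solve the stationary problem 𝔄_σ φ + g(φ) = 0 in X_{σ0}' with g(φ) ∈ L²(Ω). Then φ ∈ L^∞(Ω), and in fact ess sup_Ω |φ| ≤ γ. -/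
/-!
Test the equation with `T(φ)`, where `T` is monotone, `1`-Lipschitz, bounded, `T 0 = 0`, and
`g · T > 0` wherever `T ≠ 0`. Monotonicity of `T` makes the Gagliardo form
`⟨𝔄_σ φ, T(φ)⟩` nonnegative, so the equation forces `∫_Ω g(φ) T(φ) = 0` and hence `T(φ) = 0` a.e.
The truncations `T = min ((φ - γ)⁺, 1)` and `T = -min ((φ + γ)⁻, 1)` give `φ ≤ γ` and `-γ ≤ φ`;
the cap at `1` keeps `g(φ) T(φ)` integrable knowing only `g(φ) ∈ L²(Ω)`.
-/

open MeasureTheory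
open scoped ENNReal

section Gagliardo

variable {α : Type*} {k : α → α → ℝ}

noncomputable def gagliardoIntegrand (k : α → α → ℝ) (u v : α → ℝ) (q : α × α) : ℝ :=
  (u q.1 - u q.2) * (v q.1 - v q.2) / k q.1 q.2

theorem gagliardoIntegrand_comp_nonneg {u : α → ℝ} {T : ℝ → ℝ} (hk : ∀ x y, 0 ≤ k x y)
    (hT : Monotone T) (q : α × α) :
    0 ≤ gagliardoIntegrand k u (T ∘ u) q := by
  refine div_nonneg ?_ (hk _ _)
  rw [mul_comm]
  exact (monovary_id_iff.2 hT).sub_mul_sub_nonneg (u q.2) (u q.1)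

variable [MeasurableSpace α] {μ : Measure α}

noncomputable def gagliardoEnergy (μ : Measure α) (k : α → α → ℝ) (u : α → ℝ) : ℝ≥0∞ :=
  ∫⁻ x, ∫⁻ y, ENNReal.ofReal (|u x - u y| ^ 2 / k x y) ∂μ ∂μ

/-- `φ` is a weak solution of `c 𝔄 φ + g(φ) = 0` in `Ω`, where `𝔄` is the operator whose
bilinear form has kernel `1 / k`; test functions are the measurable `ζ` of finite energy vanishing
off `Ω`. -/
def IsWeakStationarySolution (μ : Measure α) (Ω : Set α) (k : α → α → ℝ) (c : ℝ)
    (g : ℝ → ℝ) (φ : α → ℝ) : Prop :=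
  ∀ ζ : α → ℝ, Measurable ζ → (∀ᵐ x ∂μ, x ∉ Ω → ζ x = 0) → gagliardoEnergy μ k ζ < ⊤ →
    Integrable (gagliardoIntegrand k φ ζ) (μ.prod μ) →
    Integrable (fun x => g (φ x) * ζ x) (μ.restrict Ω) →
    c * ∫ q, gagliardoIntegrand k φ ζ q ∂(μ.prod μ) + ∫ x in Ω, g (φ x) * ζ x ∂μ = 0

theorem gagliardoEnergy_mono {u v : α → ℝ} (hk : ∀ x y, 0 ≤ k x y)
    (hvu : ∀ x y, |v x - v y| ≤ |u x - u y|) :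
    gagliardoEnergy μ k v ≤ gagliardoEnergy μ k u :=
  lintegral_mono fun x => lintegral_mono fun y => ENNReal.ofReal_le_ofReal <|
    div_le_div_of_nonneg_right (pow_le_pow_left₀ (abs_nonneg _) (hvu x y) 2) (hk x y)

theorem integrable_gagliardoIntegrand [SFinite μ] {u v : α → ℝ}
    (hkm : Measurable fun q : α × α => k q.1 q.2) (hk : ∀ x y, 0 ≤ k x y)
    (hu : Measurable u) (hv : Measurable v) (hvu : ∀ x y, |v x - v y| ≤ |u x - u y|)
    (hE : gagliardoEnergy μ k u < ⊤) :
    Integrable (gagliardoIntegrand k u v) (μ.prod μ) := by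
  set G : α × α → ℝ := fun q => |u q.1 - u q.2| ^ 2 / k q.1 q.2
  have hGm : Measurable G :=
    (((hu.comp measurable_fst).sub (hu.comp measurable_snd)).abs.pow_const 2).div hkm
  have hG : Integrable G (μ.prod μ) := by
    refine ⟨hGm.aestronglyMeasurable, (hasFiniteIntegral_iff_ofReal ?_).2 ?_⟩
    · exact ae_of_all _ fun q => div_nonneg (by positivity) (hk _ _)
    · rwa [lintegral_prod _ hGm.ennreal_ofReal.aemeasurable]
  refine hG.mono' ?_ (ae_of_all _ fun q => ?_)
  · exact ((((hu.comp measurable_fst).sub (hu.comp measurable_snd)).mul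
      ((hv.comp measurable_fst).sub (hv.comp measurable_snd))).div hkm).aestronglyMeasurable
  · show ‖gagliardoIntegrand k u v q‖ ≤ |u q.1 - u q.2| ^ 2 / k q.1 q.2
    rw [gagliardoIntegrand, Real.norm_eq_abs, abs_div, abs_of_nonneg (hk _ _), abs_mul, sq]
    exact div_le_div_of_nonneg_right
      (mul_le_mul_of_nonneg_left (hvu _ _) (abs_nonneg _)) (hk _ _)

theorem IsWeakStationarySolution.ae_comp_eq_zero [SFinite μ] {Ω : Set α} {c : ℝ}
    {g : ℝ → ℝ} {φ : α → ℝ} {T : ℝ → ℝ} (hφ : IsWeakStationarySolution μ Ω k c g φ)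
    (hc : 0 ≤ c) (hΩ : μ Ω ≠ ∞) (hkm : Measurable fun q : α × α => k q.1 q.2)
    (hk : ∀ x y, 0 ≤ k x y) (hg : Measurable g) (hφm : Measurable φ)
    (hφ0 : ∀ᵐ x ∂μ, x ∉ Ω → φ x = 0) (hφE : gagliardoEnergy μ k φ < ⊤)
    (hgφ : Integrable (fun x => g (φ x) ^ 2) (μ.restrict Ω))
    (hmono : Monotone T) (hlip : LipschitzWith 1 T) (hT0 : T 0 = 0) (hb : ∀ t, |T t| ≤ 1)
    (hpos : ∀ r, T r ≠ 0 → 0 < g r * T r) :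
    ∀ᵐ x ∂μ.restrict Ω, T (φ x) = 0 := by
  have : IsFiniteMeasure (μ.restrict Ω) := isFiniteMeasure_restrict.2 hΩ
  have hinc : ∀ x y, |T (φ x) - T (φ y)| ≤ |φ x - φ y| := fun x y => by
    simpa [Real.dist_eq] using hlip.dist_le_mul (φ x) (φ y)
  have hζm : Measurable (T ∘ φ) := hlip.continuous.measurable.comp hφm
  have hgζ : Integrable (fun x => g (φ x) * T (φ x)) (μ.restrict Ω) :=
    (((memLp_two_iff_integrable_sq (hg.comp hφm).aestronglyMeasurable).2 hgφ).integrable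
      one_le_two).mul_bdd hζm.aestronglyMeasurable (ae_of_all _ fun x => hb _)
  have hgζ_nonneg : ∀ x, 0 ≤ g (φ x) * T (φ x) := fun x => by
    by_cases hx : T (φ x) = 0
    · simp [hx]
    · exact (hpos _ hx).le
  have hform : 0 ≤ ∫ q, gagliardoIntegrand k φ (T ∘ φ) q ∂(μ.prod μ) :=
    integral_nonneg (gagliardoIntegrand_comp_nonneg hk hmono)
  have heq : c * ∫ q, gagliardoIntegrand k φ (T ∘ φ) q ∂(μ.prod μ)
      + ∫ x in Ω, g (φ x) * T (φ x) ∂μ = 0 :=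
    hφ (T ∘ φ) hζm (hφ0.mono fun x hx hxΩ => by simp [hx hxΩ, hT0])
      ((gagliardoEnergy_mono hk hinc).trans_lt hφE)
      (integrable_gagliardoIntegrand hkm hk hφm hζm hinc hφE) hgζ
  have hzero : ∫ x in Ω, g (φ x) * T (φ x) ∂μ = 0 :=
    le_antisymm (by linarith [mul_nonneg hc hform]) (integral_nonneg hgζ_nonneg)
  filter_upwards [(integral_eq_zero_iff_of_nonneg hgζ_nonneg hgζ).1 hzero] with x hx
  by_contra hne
  exact (hpos _ hne).ne' hx

end Gagliardo

section Cutoff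

def upperCutoff (γ t : ℝ) : ℝ := min (max (t - γ) 0) 1

def lowerCutoff (γ t : ℝ) : ℝ := -upperCutoff γ (-t)

variable {γ t : ℝ}

theorem monotone_upperCutoff (γ : ℝ) : Monotone (upperCutoff γ) := fun _ _ hab =>
  min_le_min_right _ (max_le_max_right _ (sub_le_sub_right hab _))

theorem lipschitzWith_upperCutoff (γ : ℝ) : LipschitzWith 1 (upperCutoff γ) := by
  have hsub : LipschitzWith 1 fun t : ℝ => t - γ := by
    simpa [sub_eq_add_neg] using (isometry_add_right (-γ)).lipschitz
  exact (hsub.max_const 0).min_const 1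

theorem upperCutoff_nonneg : 0 ≤ upperCutoff γ t :=
  le_min (le_max_right _ _) zero_le_one

theorem abs_upperCutoff_le_one : |upperCutoff γ t| ≤ 1 := by
  rw [abs_of_nonneg upperCutoff_nonneg]
  exact min_le_right _ _

theorem upperCutoff_pos_iff : 0 < upperCutoff γ t ↔ γ < t := by
  simp [upperCutoff]

theorem upperCutoff_eq_zero_iff : upperCutoff γ t = 0 ↔ t ≤ γ := by
  rw [← not_lt, ← upperCutoff_pos_iff, upperCutoff_nonneg.lt_iff_ne', not_not]

theorem monotone_lowerCutoff (γ : ℝ) : Monotone (lowerCutoff γ) := fun _ _ hab =>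
  neg_le_neg (monotone_upperCutoff γ (neg_le_neg hab))

theorem lipschitzWith_lowerCutoff (γ : ℝ) : LipschitzWith 1 (lowerCutoff γ) := by
  show LipschitzWith 1 (Neg.neg ∘ upperCutoff γ ∘ Neg.neg)
  simpa only [mul_one] using isometry_neg.lipschitz.comp
    ((lipschitzWith_upperCutoff γ).comp isometry_neg.lipschitz)

theorem abs_lowerCutoff_le_one : |lowerCutoff γ t| ≤ 1 := by
  rw [lowerCutoff, abs_neg]
  exact abs_upperCutoff_le_one

theorem lowerCutoff_neg_iff : lowerCutoff γ t < 0 ↔ t < -γ := by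
  rw [lowerCutoff, neg_lt_zero, upperCutoff_pos_iff, lt_neg]

theorem lowerCutoff_eq_zero_iff : lowerCutoff γ t = 0 ↔ -γ ≤ t := by
  rw [lowerCutoff, neg_eq_zero, upperCutoff_eq_zero_iff, neg_le]

theorem mul_upperCutoff_pos {g : ℝ → ℝ} (hγ : 0 ≤ γ)
    (hsign : ∀ r : ℝ, γ < |r| → 0 < g r * Real.sign r) (ht : upperCutoff γ t ≠ 0) :
    0 < g t * upperCutoff γ t := by
  have hpos := upperCutoff_nonneg.lt_of_ne' ht
  have hγt : γ < t := upperCutoff_pos_iff.1 hpos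
  have hgt := hsign t (hγt.trans_le (le_abs_self t))
  rw [Real.sign_of_pos (hγ.trans_lt hγt), mul_one] at hgt
  exact mul_pos hgt hpos

theorem mul_lowerCutoff_pos {g : ℝ → ℝ} (hγ : 0 ≤ γ)
    (hsign : ∀ r : ℝ, γ < |r| → 0 < g r * Real.sign r) (ht : lowerCutoff γ t ≠ 0) :
    0 < g t * lowerCutoff γ t := by
  have hneg : lowerCutoff γ t < 0 :=
    lt_of_le_of_ne (neg_nonpos.2 upperCutoff_nonneg) ht
  have htγ : t < -γ := lowerCutoff_neg_iff.1 hneg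
  have hgt := hsign t (lt_neg.1 htγ |>.trans_le (neg_le_abs t))
  rw [Real.sign_of_neg (htγ.trans_le (neg_nonpos.2 hγ)), mul_neg_one, neg_pos] at hgt
  exact mul_pos_of_neg_of_neg hgt hneg

end Cutoff

theorem stationary_solutions_bounded_general (N : ℕ) (Ω : Set (Fin N → ℝ))
    (hΩbdd : Bornology.IsBounded Ω)
    (σ Cσ : ℝ) (hCσ : 0 < Cσ)
    (g : ℝ → ℝ) (hgcont : Continuous g) (γ : ℝ) (hγ : 0 < γ)
    (hsign : ∀ r : ℝ, γ < |r| → 0 < g r * Real.sign r)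
    (φ : (Fin N → ℝ) → ℝ) (hφm : Measurable φ)
    (hφ0 : ∀ᵐ x ∂volume, x ∉ Ω → φ x = 0)
    (hφX : (∫⁻ x, ∫⁻ y,
        ENNReal.ofReal (|φ x - φ y| ^ 2 / ‖x - y‖ ^ ((N : ℝ) + 2 * σ)) ∂volume ∂volume) < ⊤)
    (hgφ : Integrable (fun x => (g (φ x)) ^ 2) (volume.restrict Ω))
    (heq : ∀ ζ : (Fin N → ℝ) → ℝ, Measurable ζ →
      (∀ᵐ x ∂volume, x ∉ Ω → ζ x = 0) →
      (∫⁻ x, ∫⁻ y,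
        ENNReal.ofReal (|ζ x - ζ y| ^ 2 / ‖x - y‖ ^ ((N : ℝ) + 2 * σ)) ∂volume ∂volume) < ⊤ →
      Integrable (fun q : (Fin N → ℝ) × (Fin N → ℝ) =>
        (φ q.1 - φ q.2) * (ζ q.1 - ζ q.2) / ‖q.1 - q.2‖ ^ ((N : ℝ) + 2 * σ))
        (volume.prod volume) →
      Integrable (fun x => g (φ x) * ζ x) (volume.restrict Ω) →
      (Cσ / 2) * (∫ q : (Fin N → ℝ) × (Fin N → ℝ),
          (φ q.1 - φ q.2) * (ζ q.1 - ζ q.2) / ‖q.1 - q.2‖ ^ ((N : ℝ) + 2 * σ)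
          ∂(volume.prod volume))
        + ∫ x in Ω, g (φ x) * ζ x ∂volume = 0) :
    ∀ᵐ x ∂volume.restrict Ω, |φ x| ≤ γ := by
  have hφ : IsWeakStationarySolution volume Ω (fun x y => ‖x - y‖ ^ ((N : ℝ) + 2 * σ))
      (Cσ / 2) g φ := heq
  have hkm : Measurable fun q : (Fin N → ℝ) × (Fin N → ℝ) => ‖q.1 - q.2‖ ^ ((N : ℝ) + 2 * σ) := by
    fun_prop
  have hk : ∀ x y : Fin N → ℝ, 0 ≤ ‖x - y‖ ^ ((N : ℝ) + 2 * σ) := fun _ _ => by positivity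
  have hT {T : ℝ → ℝ} := hφ.ae_comp_eq_zero (T := T) (by linarith) hΩbdd.measure_lt_top.ne
    hkm hk hgcont.measurable hφm hφ0 hφX hgφ
  filter_upwards [hT (monotone_upperCutoff γ) (lipschitzWith_upperCutoff γ)
      (upperCutoff_eq_zero_iff.2 hγ.le) (fun _ => abs_upperCutoff_le_one)
      (fun _ => mul_upperCutoff_pos hγ.le hsign),
    hT (monotone_lowerCutoff γ) (lipschitzWith_lowerCutoff γ)
      (lowerCutoff_eq_zero_iff.2 (neg_nonpos.2 hγ.le)) (fun _ => abs_lowerCutoff_le_one)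
      (fun _ => mul_lowerCutoff_pos hγ.le hsign)] with x hup hlow
  exact abs_le.2 ⟨lowerCutoff_eq_zero_iff.1 hlow, upperCutoff_eq_zero_iff.1 hup⟩

/-- If `g` is continuous with `g(r)·sign(r) > 0` for `|r| > γ`, then any weak solution
`φ ∈ X_{σ0}` of the stationary problem `𝔄_σ φ + g(φ) = 0` (with `g(φ) ∈ L²(Ω)`) is
essentially bounded, with `ess sup_Ω |φ| ≤ γ`.  The equation is expressed in weak form
through the (scaled) Gagliardo bilinear form tested against functions in `X_{σ0}`. -/
theorem stationary_solutions_bounded (N : ℕ) (hN : 0 < N) (Ω : Set (Fin N → ℝ))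
    (hΩmeas : MeasurableSet Ω) (hΩbdd : Bornology.IsBounded Ω)
    (σ Cσ : ℝ) (hσ0 : 0 < σ) (hσ1 : σ < 1) (hCσ : 0 < Cσ)
    (g : ℝ → ℝ) (hgcont : Continuous g) (γ : ℝ) (hγ : 0 < γ)
    (hsign : ∀ r : ℝ, γ < |r| → 0 < g r * Real.sign r)
    (φ : (Fin N → ℝ) → ℝ) (hφm : Measurable φ)
    (hφ0 : ∀ᵐ x ∂volume, x ∉ Ω → φ x = 0)
    (hφX : (∫⁻ x, ∫⁻ y,
        ENNReal.ofReal (|φ x - φ y| ^ 2 / ‖x - y‖ ^ ((N : ℝ) + 2 * σ)) ∂volume ∂volume) < ⊤)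
    (hgφ : Integrable (fun x => (g (φ x)) ^ 2) (volume.restrict Ω))
    (heq : ∀ ζ : (Fin N → ℝ) → ℝ, Measurable ζ →
      (∀ᵐ x ∂volume, x ∉ Ω → ζ x = 0) →
      (∫⁻ x, ∫⁻ y,
        ENNReal.ofReal (|ζ x - ζ y| ^ 2 / ‖x - y‖ ^ ((N : ℝ) + 2 * σ)) ∂volume ∂volume) < ⊤ →
      Integrable (fun q : (Fin N → ℝ) × (Fin N → ℝ) =>
        (φ q.1 - φ q.2) * (ζ q.1 - ζ q.2) / ‖q.1 - q.2‖ ^ ((N : ℝ) + 2 * σ))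
        (volume.prod volume) →
      Integrable (fun x => g (φ x) * ζ x) (volume.restrict Ω) →
      (Cσ / 2) * (∫ q : (Fin N → ℝ) × (Fin N → ℝ),
          (φ q.1 - φ q.2) * (ζ q.1 - ζ q.2) / ‖q.1 - q.2‖ ^ ((N : ℝ) + 2 * σ)
          ∂(volume.prod volume))
        + ∫ x in Ω, g (φ x) * ζ x ∂volume = 0) :
    ∀ᵐ x ∂volume.restrict Ω, |φ x| ≤ γ :=
  stationary_solutions_bounded_general N Ω hΩbdd σ Cσ hCσ g hgcont γ hγ hsign φ hφm hφ0 hφX hgφ heq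
end

section
/- Let φ ∈ X_{σ0} ∩ L^∞(Ω) and define the linearized operator 𝓛(φ) : X_{σ0} → X_{σ0}' by 𝓛(φ)u = 𝔄_σ u + g'(φ)u, where g ∈ C¹(ℝ). Let 𝓝 = Ker(𝓛(φ)) and let P : L²(Ω) → 𝓝 be the orthogonal projection. Then 𝓛(φ) + P is a linear isomorphism from X_{σ0} onto X_{σ0}'. -/
open scoped RealInnerProductSpace

/-! `𝓛(φ) + P` is `𝔄 ∘ (1 + K)` with `K = j† (m + P) j` compact, so by the Fredholm alternative
it suffices that `1 + K` is injective. If `(L + j† P j) u = 0` with `L = 1 + j† m j`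
self-adjoint, then pairing with any `w ∈ Ker L` gives `⟪P (j u), j w⟫ = -⟪u, L w⟫ = 0`; since
`P (j u)` itself lies in `j (Ker L)`, it vanishes, so `u ∈ Ker L`, and then `j u = P (j u) = 0`. -/

open ContinuousLinearMap

theorem IsCompactOperator.isUnit_one_add_of_injective {𝕜 X : Type*} [NontriviallyNormedField 𝕜]
    [NormedAddCommGroup X] [NormedSpace 𝕜 X] [CompleteSpace X] {K : X →L[𝕜] X}
    (hK : IsCompactOperator K) (hinj : Function.Injective ⇑(1 + K)) : IsUnit (1 + K) := by
  rcases hK.hasEigenvalue_or_mem_resolventSet (μ := -1) (by norm_num) with heig | hres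
  · obtain ⟨x, hx, hx0⟩ := heig.exists_hasEigenvector
    refine absurd (hinj ?_) hx0
    simp only [Module.End.mem_eigenspace_iff, coe_coe] at hx
    simp [hx]
  · rw [spectrum.mem_resolventSet_iff, map_neg, map_one, ← neg_add', IsUnit.neg_iff] at hres
    exact hres

section InnerProductSpace

variable {𝕜 X H : Type*} [RCLike 𝕜]
  [NormedAddCommGroup X] [InnerProductSpace 𝕜 X] [CompleteSpace X]
  [NormedAddCommGroup H] [InnerProductSpace 𝕜 H] [CompleteSpace H]

theorem injective_add_adjoint_comp_comp {L : X →L[𝕜] X} (hL : IsSelfAdjoint L) {j : X →L[𝕜] H}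
    (hj : Function.Injective j) {P : H →L[𝕜] H}
    (hPrange : ∀ x, P x ∈ (LinearMap.ker (L : X →ₗ[𝕜] X)).map (j : X →ₗ[𝕜] H))
    (hPfix : ∀ x ∈ (LinearMap.ker (L : X →ₗ[𝕜] X)).map (j : X →ₗ[𝕜] H), P x = x) :
    Function.Injective (L + adjoint j ∘L P ∘L j) := by
  refine (injective_iff_map_eq_zero _).mpr fun u hu => ?_
  have hPu : adjoint j (P (j u)) = -L u := eq_neg_of_add_eq_zero_right hu
  obtain ⟨w, hw, hjw : j w = P (j u)⟩ := hPrange (j u)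
  have hPju : P (j u) = 0 := by
    rw [← inner_self_eq_zero (𝕜 := 𝕜)]
    nth_rw 2 [← hjw]
    rw [← adjoint_inner_left, hPu, inner_neg_left, ← coe_coe L, hL.isSymmetric, hw,
      inner_zero_right, neg_zero]
  have hLu : L u = 0 := by simpa [hPju] using hPu.symm
  exact hj (by simpa [hPju] using (hPfix (j u) ⟨u, hLu, rfl⟩).symm)

end InnerProductSpace

theorem linearized_operator_isomorphism_general (X H : Type*)
    [NormedAddCommGroup X] [InnerProductSpace ℝ X] [CompleteSpace X]
    [NormedAddCommGroup H] [InnerProductSpace ℝ H] [CompleteSpace H]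
    (𝔄 : X ≃L[ℝ] (X →L[ℝ] ℝ))
    (j : X →L[ℝ] H) (hjcompact : IsCompactOperator j) (hjinj : Function.Injective j)
    (m : H →L[ℝ] H) (hm : ∀ x y : H, ⟪m x, y⟫ = ⟪x, m y⟫)
    (P : H →L[ℝ] H)
    (hPrange : ∀ x : H, P x ∈ Submodule.map j.toLinearMap
      (LinearMap.ker (ContinuousLinearMap.id ℝ X
        + (ContinuousLinearMap.adjoint j).comp (m.comp j)).toLinearMap))
    (hPfix : ∀ x ∈ Submodule.map j.toLinearMap
      (LinearMap.ker (ContinuousLinearMap.id ℝ X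
        + (ContinuousLinearMap.adjoint j).comp (m.comp j)).toLinearMap), P x = x) :
    ∃ e : X ≃L[ℝ] (X →L[ℝ] ℝ), ∀ u : X,
      e u = 𝔄 (u + (ContinuousLinearMap.adjoint j) (m (j u))
              + (ContinuousLinearMap.adjoint j) (P (j u))) := by
  have hL : IsSelfAdjoint (ContinuousLinearMap.id ℝ X + adjoint j ∘L m ∘L j) :=
    (IsSelfAdjoint.one _).add ((isSelfAdjoint_iff_isSymmetric.mpr hm).adjoint_conj j)
  have hinj := injective_add_adjoint_comp_comp hL hjinj hPrange hPfix
  have hK : IsCompactOperator (adjoint j ∘L (m + P) ∘L j) :=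
    (hjcompact.clm_comp (m + P)).clm_comp (adjoint j)
  have hunit := hK.isUnit_one_add_of_injective (by convert hinj using 1; ext; simp [add_assoc])
  refine ⟨(ContinuousLinearEquiv.ofUnit hunit.unit).trans 𝔄, fun u => ?_⟩
  simp [ContinuousLinearEquiv.ofUnit, add_assoc]

/-- Let `X = X_{σ0}` (a real Hilbert space whose inner product is the Gagliardo form,
so that the duality map `𝔄 = 𝔄_σ` satisfies `𝔄 u v = ⟪u,v⟫`), let `j : X → H = L²(Ω)` be
the compact embedding, `m` the (bounded, symmetric) multiplication by `g'(φ) ∈ L^∞(Ω)`,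
and `P` the orthogonal projection of `H` onto the kernel
`𝓝 = Ker 𝓛(φ) = Ker (Id + j† m j)` (viewed in `H` via `j`).  Then
`𝓛(φ) + P : u ↦ 𝔄(u + j†(m(j u)) + j†(P(j u)))` is a linear isomorphism from `X_{σ0}`
onto `X_{σ0}'`. -/
theorem linearized_operator_isomorphism (X H : Type*)
    [NormedAddCommGroup X] [InnerProductSpace ℝ X] [CompleteSpace X]
    [NormedAddCommGroup H] [InnerProductSpace ℝ H] [CompleteSpace H]
    (𝔄 : X ≃L[ℝ] (X →L[ℝ] ℝ)) (h𝔄 : ∀ u v : X, 𝔄 u v = ⟪u, v⟫)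
    (j : X →L[ℝ] H) (hjcompact : IsCompactOperator j) (hjinj : Function.Injective j)
    (m : H →L[ℝ] H) (hm : ∀ x y : H, ⟪m x, y⟫ = ⟪x, m y⟫)
    (P : H →L[ℝ] H)
    (hPrange : ∀ x : H, P x ∈ Submodule.map j.toLinearMap
      (LinearMap.ker (ContinuousLinearMap.id ℝ X
        + (ContinuousLinearMap.adjoint j).comp (m.comp j)).toLinearMap))
    (hPfix : ∀ x ∈ Submodule.map j.toLinearMap
      (LinearMap.ker (ContinuousLinearMap.id ℝ X
        + (ContinuousLinearMap.adjoint j).comp (m.comp j)).toLinearMap), P x = x)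
    (hPsym : ∀ x y : H, ⟪P x, y⟫ = ⟪x, P y⟫) :
    ∃ e : X ≃L[ℝ] (X →L[ℝ] ℝ), ∀ u : X,
      e u = 𝔄 (u + (ContinuousLinearMap.adjoint j) (m (j u))
              + (ContinuousLinearMap.adjoint j) (P (j u))) :=
  linearized_operator_isomorphism_general X H 𝔄 j hjcompact hjinj m hm P hPrange hPfix
end

section
/- Under the Łojasiewicz–Simon inequality with exponent θ ∈ (0,1/2] at an equilibrium φ, the auxiliary function H(t) = (E_σ(u(t)) − E_σ(φ))^θ of a weak solution u satisfies, at each time t where ‖u(t) − φ‖_{X_{σ0}} < δ and the energy inequality d/dt E_σ(u(t)) ≤ −‖w(t)‖²_{X_{s0}} holds, the key differential estimate −d/dt H(t) ≥ ω^{−1} θ C^{−1} ‖∂_t u(t)‖_{X_{s0}'}, where C is the constant with ‖w‖_{X_{σ0}'} ≤ C ‖w‖_{X_{s0}}. -/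
/-- Key differential estimate from the Łojasiewicz–Simon inequality: with
`H(t) = (E_σ(u(t)) - E_σ(φ))^θ`, at a time `t` where `‖u(t) - φ‖_{X_{σ0}} < δ`,
`E_σ(u(t)) > E_σ(φ)`, the energy inequality `d/dt E_σ(u(t)) ≤ -‖w(t)‖²_{X_{s0}}` holds
and `t ↦ E_σ(u(t))` is differentiable, one has `-H'(t) ≥ ω⁻¹ θ C⁻¹ ‖∂_t u(t)‖_{X_{s0}'}`.
Scalar reduction: `Eu t = E_σ(u(t))`, `Ephi = E_σ(φ)`, `W t = ‖w(t)‖_{X_{s0}}`,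
`Wdual t = ‖𝔄_σ u(t) + g(u(t))‖_{X_{σ0}'} = ‖w(t)‖_{X_{σ0}'}`, and
`dut t = ‖∂_t u(t)‖_{X_{s0}'} = ‖𝔄_s w(t)‖_{X_{s0}'} = ‖w(t)‖_{X_{s0}}`. -/
theorem lojasiewicz_differential_estimate
    (θ ω C δ Ephi : ℝ) (hθ0 : 0 < θ) (hθ : θ ≤ 1 / 2) (hω : 0 < ω) (hC : 0 < C)
    (hδ : 0 < δ)
    (Eu W Wdual dut distφ : ℝ → ℝ) (t : ℝ)
    (hclose : distφ t < δ)                      -- ‖u(t) - φ‖_{X_{σ0}} < δ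
    (hgap : Ephi < Eu t)                        -- E_σ(u(t)) > E_σ(φ)
    (hWnonneg : 0 ≤ W t) (hWdualnonneg : 0 ≤ Wdual t)
    (hLS : (Eu t - Ephi) ^ (1 - θ) ≤ ω * Wdual t)   -- Łojasiewicz–Simon at u(t)
    (hcmp : Wdual t ≤ C * W t)                  -- ‖w‖_{X_{σ0}'} ≤ C ‖w‖_{X_{s0}}
    (hdut : dut t = W t)                        -- ‖∂_t u‖_{X_{s0}'} = ‖𝔄_s w‖ = ‖w‖_{X_{s0}}
    (e' : ℝ) (hdiff : HasDerivAt Eu e' t)       -- differentiability of the energy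
    (henergy : e' ≤ -(W t) ^ 2) :               -- energy inequality
    ∃ h' : ℝ, HasDerivAt (fun s => (Eu s - Ephi) ^ θ) h' t ∧
      ω⁻¹ * θ * C⁻¹ * dut t ≤ -h' := by
  have hg : 0 < Eu t - Ephi := sub_pos.mpr hgap
  have hf : HasDerivAt (fun s => Eu s - Ephi) e' t := hdiff.sub_const Ephi
  have hder := hf.rpow_const (p := θ) (Or.inl hg.ne')
  refine ⟨_, hder, ?_⟩
  rw [hdut]
  set g := Eu t - Ephi with hgdef
  set a := g ^ (1 - θ) with hadef
  have ha : 0 < a := Real.rpow_pos_of_pos hg _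
  have hkey : a ≤ ω * C * W t := by
    calc a ≤ ω * Wdual t := hLS
    _ ≤ ω * (C * W t) := by nlinarith
    _ = ω * C * W t := by ring
  have hainv : g ^ (θ - 1) = a⁻¹ := by
    rw [hadef, ← Real.rpow_neg hg.le]
    ring_nf
  rw [hainv] at hder ⊢
  have hainv_pos : 0 < a⁻¹ := inv_pos.mpr ha
  have hmul : a * a⁻¹ = 1 := mul_inv_cancel₀ ha.ne'
  have h1 : W t ^ 2 * θ * a⁻¹ ≤ (-e') * θ * a⁻¹ :=
    mul_le_mul_of_nonneg_right
      (mul_le_mul_of_nonneg_right (by linarith) hθ0.le) hainv_pos.le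
  rcases eq_or_lt_of_le hWnonneg with hW0 | hWpos
  · rw [← hW0]
    have h0 : 0 ≤ W t ^ 2 * θ * a⁻¹ := by positivity
    nlinarith
  · have hfac : W t ^ 2 * θ * a⁻¹ - ω⁻¹ * θ * C⁻¹ * W t
        = (θ * W t * ω⁻¹ * C⁻¹ * a⁻¹) * (ω * C * W t - a) := by
      field_simp
    have h2 : ω⁻¹ * θ * C⁻¹ * W t ≤ W t ^ 2 * θ * a⁻¹ := by
      rw [← sub_nonneg, hfac]
      exact mul_nonneg (by positivity) (by linarith)
    linarith
end
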